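/- arXiv:1710.03165 — 2 statements merged into one kernel-verified Lean document; each statement's English description precedes it below -/
import Mathlib

section
/- A set system 𝓕 ⊆ 2^[n] is s-extremal if and only if there exists a Sperner family 𝓢 ⊆ 2^[n] such that 𝓕 shatters no element of 𝓢 and |𝓕| = |𝓗(𝓢)|. -/
/-!
Shattered sets form a down-closed family, so a family `𝓓` closed under subsets is exactly
`𝓗(𝓢)` for the Sperner family `𝓢` of minimal sets outside `𝓓`. Taking `𝓓 = Sh(𝓕)` gives one
direction. Conversely, if `𝓕` shatters no member of `𝓢` then `Sh(𝓕) ⊆ 𝓗(𝓢)`, and Pajor's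
inequality `|𝓕| ≤ |Sh(𝓕)|` squeezes `|Sh(𝓕)|` between `|𝓕|` and `|𝓗(𝓢)| = |𝓕|`.
-/

open Finset

/-- `𝓕` shatters `S` if every subset of `S` arises as `F ∩ S` for some `F ∈ 𝓕`. -/
def ShattersFam {n : ℕ} (𝓕 : Finset (Finset (Fin n))) (S : Finset (Fin n)) : Prop :=
  𝓕.image (· ∩ S) = S.powerset

/-- The family of all subsets of `[n]` shattered by `𝓕`. -/
def ShFam {n : ℕ} (𝓕 : Finset (Finset (Fin n))) : Finset (Finset (Fin n)) :=
  Finset.univ.filter fun S => 𝓕.image (· ∩ S) = S.powerset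

/-- A set system is shattering-extremal if it shatters exactly `|𝓕|` sets. -/
def SExtremal {n : ℕ} (𝓕 : Finset (Finset (Fin n))) : Prop :=
  (ShFam 𝓕).card = 𝓕.card

/-- A Sperner family: no member contains another member. -/
def IsSperner {n : ℕ} (𝓢 : Finset (Finset (Fin n))) : Prop :=
  ∀ S ∈ 𝓢, ∀ S' ∈ 𝓢, S ⊆ S' → S = S'

/-- `Q S H = {T ⊆ [n] : T ∩ S = H}`. -/
def Q {n : ℕ} (S H : Finset (Fin n)) : Finset (Finset (Fin n)) :=
  Finset.univ.filter fun T => T ∩ S = H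

/-- `𝓗(𝓢) = {T ⊆ [n] : no S ∈ 𝓢 satisfies S ⊆ T}`. -/
def HFam {n : ℕ} (𝓢 : Finset (Finset (Fin n))) : Finset (Finset (Fin n)) :=
  Finset.univ.filter fun T => ∀ S ∈ 𝓢, ¬ S ⊆ T

/-- `𝓕(𝓢,h) = 2^[n] \ ⋃_{S ∈ 𝓢} Q_{S,h(S)}`. -/
def FFam {n : ℕ} (𝓢 : Finset (Finset (Fin n))) (h : Finset (Fin n) → Finset (Fin n)) :
    Finset (Finset (Fin n)) :=
  Finset.univ \ 𝓢.biUnion fun S => Q S (h S)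

section Shattering

variable {n : ℕ} (𝓕 : Finset (Finset (Fin n)))

lemma shattersFam_iff_shatters (S : Finset (Fin n)) : ShattersFam 𝓕 S ↔ 𝓕.Shatters S := by
  simp only [ShattersFam, shatters_iff, inter_comm _ S]

lemma mem_shFam {S : Finset (Fin n)} : S ∈ ShFam 𝓕 ↔ ShattersFam 𝓕 S := by
  simp only [ShFam, ShattersFam, mem_filter, mem_univ, true_and]

lemma shFam_eq_shatterer : ShFam 𝓕 = 𝓕.shatterer := by
  ext S
  rw [mem_shFam, shattersFam_iff_shatters, mem_shatterer]

lemma isLowerSet_shFam : IsLowerSet (ShFam 𝓕 : Set (Finset (Fin n))) := by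
  rw [shFam_eq_shatterer]
  exact isLowerSet_shatterer 𝓕

end Shattering

section LowerSet

variable {n : ℕ} {𝓓 : Finset (Finset (Fin n))}

noncomputable def minimalNonMembers (𝓓 : Finset (Finset (Fin n))) : Finset (Finset (Fin n)) :=
  open Classical in univ.filter (Minimal (· ∉ 𝓓))

lemma mem_minimalNonMembers {S : Finset (Fin n)} :
    S ∈ minimalNonMembers 𝓓 ↔ Minimal (· ∉ 𝓓) S := by
  simp only [minimalNonMembers, mem_filter, mem_univ, true_and]

lemma isSperner_minimalNonMembers (𝓓 : Finset (Finset (Fin n))) :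
    IsSperner (minimalNonMembers 𝓓) := fun _ hS _ hS' hSS' =>
  (mem_minimalNonMembers.1 hS').eq_of_le (mem_minimalNonMembers.1 hS).prop hSS'

lemma notMem_of_mem_minimalNonMembers {S : Finset (Fin n)} (hS : S ∈ minimalNonMembers 𝓓) :
    S ∉ 𝓓 :=
  (mem_minimalNonMembers.1 hS).prop

lemma subset_hFam (h𝓓 : IsLowerSet (𝓓 : Set (Finset (Fin n)))) {𝓢 : Finset (Finset (Fin n))}
    (h𝓢 : ∀ S ∈ 𝓢, S ∉ 𝓓) : 𝓓 ⊆ HFam 𝓢 := by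
  intro T hT
  simp only [HFam, mem_filter, mem_univ, true_and]
  exact fun S hS hST => h𝓢 S hS (h𝓓 hST hT)

lemma hFam_minimalNonMembers (h𝓓 : IsLowerSet (𝓓 : Set (Finset (Fin n)))) :
    HFam (minimalNonMembers 𝓓) = 𝓓 := by
  refine Subset.antisymm (fun T hT => ?_)
    (subset_hFam h𝓓 fun _ => notMem_of_mem_minimalNonMembers)
  simp only [HFam, mem_filter, mem_univ, true_and] at hT
  by_contra hT𝓓
  obtain ⟨S, hST, hS⟩ := exists_minimal_le_of_wellFoundedLT (· ∉ 𝓓) T hT𝓓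
  exact hT S (mem_minimalNonMembers.2 hS) hST

end LowerSet

/-- `𝓕` is s-extremal iff it is `𝓢`-extremal for some Sperner family `𝓢`. -/
theorem stmt_5 {n : ℕ} (𝓕 : Finset (Finset (Fin n))) :
    SExtremal 𝓕 ↔
      ∃ 𝓢 : Finset (Finset (Fin n)), IsSperner 𝓢 ∧ (∀ S ∈ 𝓢, ¬ ShattersFam 𝓕 S) ∧
        𝓕.card = (HFam 𝓢).card := by
  constructor
  · intro hext
    refine ⟨minimalNonMembers (ShFam 𝓕), isSperner_minimalNonMembers _, fun S hS => ?_, ?_⟩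
    · exact (mem_shFam 𝓕).not.1 (notMem_of_mem_minimalNonMembers hS)
    · rw [hFam_minimalNonMembers (isLowerSet_shFam 𝓕)]
      exact hext.symm
  · rintro ⟨𝓢, -, hunshattered, hcard⟩
    have hsub : ShFam 𝓕 ⊆ HFam 𝓢 :=
      subset_hFam (isLowerSet_shFam 𝓕) fun S hS => (mem_shFam 𝓕).not.2 (hunshattered S hS)
    have hpajor : 𝓕.card ≤ (ShFam 𝓕).card := by
      rw [shFam_eq_shatterer]
      exact card_le_card_shatterer 𝓕
    exact le_antisymm (hcard ▸ card_le_card hsub) hpajor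
end

section
/- Let 𝓢 ⊆ 2^[n] be a nonempty Sperner family and A ⊆ [n] a fixed set, and let h_A be defined on subsets of [n] by h_A(S) = S ∩ A. Then there exists a set F ∉ 𝓕(𝓢,h_A) such that 𝓕' = 𝓕(𝓢,h_A) ∪ {F} is again s-extremal; moreover there exists a Sperner family 𝓢' ⊆ 2^[n] with 𝓕' = 𝓕(𝓢',h_A). -/
open Finset

/-- `𝓕` shatters `S` if every subset of `S` arises as `F ∩ S` for some `F ∈ 𝓕`. -/
def Shatters {n : ℕ} (𝓕 : Finset (Finset (Fin n))) (S : Finset (Fin n)) : Prop :=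
  𝓕.image (· ∩ S) = S.powerset

lemma mem_FFam {n : ℕ} {𝓢 : Finset (Finset (Fin n))} {h : Finset (Fin n) → Finset (Fin n)}
    {T : Finset (Fin n)} : T ∈ FFam 𝓢 h ↔ ∀ S ∈ 𝓢, T ∩ S ≠ h S := by
  simp [FFam, Q]

lemma mem_HFam {n : ℕ} {𝓢 : Finset (Finset (Fin n))} {T : Finset (Fin n)} :
    T ∈ HFam 𝓢 ↔ ∀ S ∈ 𝓢, ¬ S ⊆ T := by
  simp [HFam]

lemma inter_eq_iff {n : ℕ} {T S A : Finset (Fin n)} :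
    T ∩ S = S ∩ A ↔ ∀ x ∈ S, (x ∈ T ↔ x ∈ A) := by
  simp only [Finset.ext_iff, mem_inter]
  constructor
  · intro h x hx; have := h x; tauto
  · intro h x; by_cases hx : x ∈ S
    · have := h x hx; tauto
    · tauto

lemma shfam_FFam {n : ℕ} (𝓢 : Finset (Finset (Fin n))) (A : Finset (Fin n)) :
    ShFam (FFam 𝓢 (fun S => S ∩ A)) = HFam 𝓢 := by
  ext T
  simp only [ShFam, mem_filter, mem_univ, true_and, mem_HFam]
  constructor
  · -- if shattered, no S ∈ 𝓢 is contained in T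
    intro hsh S hS hST
    have hH : (S ∩ A) ∪ (T \ S) ∈ (FFam 𝓢 (fun S => S ∩ A)).image (· ∩ T) := by
      rw [hsh, mem_powerset]
      intro x hx
      rcases mem_union.1 hx with hx | hx
      · exact hST (mem_inter.1 hx).1
      · exact (mem_sdiff.1 hx).1
    obtain ⟨F, hF, hFT⟩ := mem_image.1 hH
    refine mem_FFam.1 hF S hS ?_
    have : F ∩ S = (F ∩ T) ∩ S := by
      rw [inter_assoc]; congr 1
      exact (inter_eq_right.2 hST).symm
    rw [this, hFT]
    ext x
    simp only [mem_inter, mem_union, mem_sdiff]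
    tauto
  · -- if no S ∈ 𝓢 is contained in T, then T is shattered
    intro hT
    apply Finset.Subset.antisymm
    · intro H hH
      obtain ⟨F, _, rfl⟩ := mem_image.1 hH
      exact mem_powerset.2 inter_subset_right
    · intro H hH
      have hHT := mem_powerset.1 hH
      refine mem_image.2 ⟨H ∪ (Tᶜ \ A), ?_, ?_⟩
      · rw [mem_FFam]
        intro S hS heq
        obtain ⟨x, hxS, hxT⟩ := not_subset.1 (hT S hS)
        have := inter_eq_iff.1 heq x hxS
        have hxH : x ∉ H := fun hx => hxT (hHT hx)
        simp only [mem_union, mem_sdiff, mem_compl] at this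
        tauto
      · ext x
        simp only [mem_inter, mem_union, mem_sdiff, mem_compl]
        constructor
        · rintro ⟨hx | ⟨hx, _⟩, hxT⟩
          · exact hx
          · exact absurd hxT hx
        · intro hx; exact ⟨Or.inl hx, hHT hx⟩

lemma mem_FFam_iff_HFam {n : ℕ} {𝓢 : Finset (Finset (Fin n))} {A T : Finset (Fin n)} :
    T ∈ FFam 𝓢 (fun S => S ∩ A) ↔ (symmDiff T A)ᶜ ∈ HFam 𝓢 := by
  rw [mem_FFam, mem_HFam]
  refine forall₂_congr fun S hS => ?_
  rw [Ne, inter_eq_iff, Finset.subset_iff]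
  constructor
  · intro h hsub
    apply h
    intro x hx
    have := hsub hx
    simp only [mem_compl, mem_symmDiff] at this
    tauto
  · intro h h'
    apply h
    intro x hx
    have := h' x hx
    simp only [mem_compl, mem_symmDiff]
    tauto

lemma card_FFam {n : ℕ} (𝓢 : Finset (Finset (Fin n))) (A : Finset (Fin n)) :
    (FFam 𝓢 (fun S => S ∩ A)).card = (HFam 𝓢).card := by
  have himage : (FFam 𝓢 (fun S => S ∩ A)).image (fun T => (symmDiff T A)ᶜ) = HFam 𝓢 := by
    ext U
    simp only [mem_image]
    constructor
    · rintro ⟨T, hT, rfl⟩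
      exact mem_FFam_iff_HFam.1 hT
    · intro hU
      refine ⟨symmDiff Uᶜ A, ?_, ?_⟩
      · rw [mem_FFam_iff_HFam, symmDiff_symmDiff_cancel_right, compl_compl]
        exact hU
      · rw [symmDiff_symmDiff_cancel_right, compl_compl]
  rw [← himage]
  rw [Finset.card_image_of_injective]
  intro a b hab
  have : symmDiff a A = symmDiff b A := compl_injective hab
  exact symmDiff_left_injective A this

lemma sextremal_FFam {n : ℕ} (𝓢 : Finset (Finset (Fin n))) (A : Finset (Fin n)) :
    SExtremal (FFam 𝓢 (fun S => S ∩ A)) := by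
  rw [SExtremal, shfam_FFam, card_FFam]

/-- The conjecture holds for `𝓕(𝓢,h_A)`: one can add a set keeping s-extremality,
and the new family is again of the form `𝓕(𝓢',h_A)`. -/
theorem stmt_8 {n : ℕ} (𝓢 : Finset (Finset (Fin n))) (A : Finset (Fin n))
    (hSperner : IsSperner 𝓢) (hne : 𝓢.Nonempty) :
    ∃ F ∉ FFam 𝓢 (fun S => S ∩ A),
      SExtremal (insert F (FFam 𝓢 (fun S => S ∩ A))) ∧
      ∃ 𝓢' : Finset (Finset (Fin n)), IsSperner 𝓢' ∧
        insert F (FFam 𝓢 (fun S => S ∩ A)) = FFam 𝓢' (fun S => S ∩ A) := by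
  obtain ⟨S₀, hS₀⟩ := hne
  set F : Finset (Fin n) := (symmDiff S₀ A)ᶜ with hFdef
  have hF : ∀ x : Fin n, x ∈ F ↔ (x ∈ S₀ ↔ x ∈ A) := by
    intro x
    simp only [hFdef, mem_compl, mem_symmDiff]
    tauto
  -- the enlarged index family
  set 𝓖 : Finset (Finset (Fin n)) :=
    (𝓢.erase S₀) ∪ (S₀ᶜ).image (fun x => insert x S₀) with h𝓖def
  have mem_𝓖 : ∀ S : Finset (Fin n),
      S ∈ 𝓖 ↔ (S ∈ 𝓢 ∧ S ≠ S₀) ∨ ∃ x, x ∉ S₀ ∧ S = insert x S₀ := by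
    intro S
    simp only [h𝓖def, mem_union, mem_erase, mem_image, mem_compl]
    constructor
    · rintro (⟨h1, h2⟩ | ⟨x, hx, rfl⟩)
      · exact Or.inl ⟨h2, h1⟩
      · exact Or.inr ⟨x, hx, rfl⟩
    · rintro (⟨h1, h2⟩ | ⟨x, hx, rfl⟩)
      · exact Or.inl ⟨h2, h1⟩
      · exact Or.inr ⟨x, hx, rfl⟩
  -- the key identity
  have hins : insert F (FFam 𝓢 (fun S => S ∩ A)) = FFam 𝓖 (fun S => S ∩ A) := by
    ext T
    rw [mem_insert]
    constructor
    · rintro (rfl | hT)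
      · rw [mem_FFam]
        intro S hS heq
        rw [inter_eq_iff] at heq
        rcases (mem_𝓖 S).1 hS with ⟨hS𝓢, hSne⟩ | ⟨x, hx, rfl⟩
        · have hsub : S ⊆ S₀ := by
            intro x hx
            have := heq x hx
            rw [hF] at this
            tauto
          exact hSne (hSperner S hS𝓢 S₀ hS₀ hsub)
        · have := heq x (mem_insert_self x S₀)
          rw [hF] at this
          tauto
      · rw [mem_FFam] at hT ⊢
        intro S hS heq
        rcases (mem_𝓖 S).1 hS with ⟨hS𝓢, _⟩ | ⟨x, hx, rfl⟩
        · exact hT S hS𝓢 heq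
        · refine hT S₀ hS₀ ?_
          rw [inter_eq_iff] at heq ⊢
          intro y hy
          exact heq y (mem_insert_of_mem hy)
    · intro hT
      rw [mem_FFam] at hT
      by_cases hc : T ∩ S₀ = S₀ ∩ A
      · left
        ext x
        rw [hF]
        by_cases hx : x ∈ S₀
        · have := inter_eq_iff.1 hc x hx
          tauto
        · have hx' := hT (insert x S₀) ((mem_𝓖 _).2 (Or.inr ⟨x, hx, rfl⟩))
          rw [Ne, inter_eq_iff] at hx'
          push_neg at hx'
          obtain ⟨y, hy, hney⟩ := hx'
          have hyx : y = x := by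
            rcases mem_insert.1 hy with h | h
            · exact h
            · exact absurd (inter_eq_iff.1 hc y h) (by tauto)
          subst hyx
          tauto
      · right
        rw [mem_FFam]
        intro S hS heq
        by_cases hSS₀ : S = S₀
        · exact hc (hSS₀ ▸ heq)
        · exact hT S ((mem_𝓖 S).2 (Or.inl ⟨hS, hSS₀⟩)) heq
  -- minimal elements of 𝓖
  set 𝓢' : Finset (Finset (Fin n)) :=
    𝓖.filter (fun S => ∀ S' ∈ 𝓖, S' ⊆ S → S' = S) with h𝓢'def
  have hSperner' : IsSperner 𝓢' := by
    intro S hS S' hS' hsub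
    exact (mem_filter.1 hS').2 S (mem_filter.1 hS).1 hsub
  have hexists_min : ∀ S ∈ 𝓖, ∃ S' ∈ 𝓢', S' ⊆ S := by
    intro S hS
    obtain ⟨S', hS', hmin⟩ := Finset.exists_min_image (𝓖.filter (· ⊆ S))
      Finset.card ⟨S, mem_filter.2 ⟨hS, Finset.Subset.refl S⟩⟩
    have hS'𝓖 := (mem_filter.1 hS').1
    have hS'S := (mem_filter.1 hS').2
    refine ⟨S', mem_filter.2 ⟨hS'𝓖, ?_⟩, hS'S⟩
    intro S'' hS'' hsub
    have h1 : S'' ∈ 𝓖.filter (· ⊆ S) :=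
      mem_filter.2 ⟨hS'', hsub.trans hS'S⟩
    exact Finset.eq_of_subset_of_card_le hsub (hmin S'' h1)
  have hFFam' : FFam 𝓖 (fun S => S ∩ A) = FFam 𝓢' (fun S => S ∩ A) := by
    ext T
    rw [mem_FFam, mem_FFam]
    constructor
    · intro hT S hS heq
      exact hT S (mem_filter.1 hS).1 heq
    · intro hT S hS heq
      obtain ⟨S', hS', hsub⟩ := hexists_min S hS
      refine hT S' hS' ?_
      rw [inter_eq_iff] at heq ⊢
      intro x hx
      exact heq x (hsub hx)
  refine ⟨F, ?_, ?_, 𝓢', hSperner', by rw [hins, hFFam']⟩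
  · rw [mem_FFam]
    push_neg
    refine ⟨S₀, hS₀, ?_⟩
    rw [inter_eq_iff]
    intro x hx
    rw [hF]
    tauto
  · rw [hins, hFFam']
    exact sextremal_FFam 𝓢' A
end
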